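/- There exists a universal constant N such that for every integer n ≥ 0, every complex polynomial P(z) = Σ_{k=0}^{n} c_k z^k, and every p ∈ [1,∞), one has ((1/(n+1)) Σ_{j=0}^{n} |P(e^{2πij/(n+1)})|^p)^{1/p} ≤ N (∫_0^1 |P(e^{2πit})|^p dt)^{1/p}. -/

import Mathlib

open MeasureTheory Complex Finset
open scoped Real BigOperators

/-!
Write `e t = exp (2πit)`, `m = n + 1`, and let `K_M(t) = |∑_{a<M} e(at)|² / M` be the Fejér kernel,
whose Fourier coefficients are `(M - |k|)₊ / M`. The de la Vallée-Poussin kernel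
`V = 2 K_{2m} - K_m` then has all Fourier coefficients `0, …, m - 1` equal to `1`, so
`P(e θ) = ∫ P(e t) V(θ - t) dt`. Bounding `|V|` by `W = 2 K_{2m} + K_m`, a kernel of mass `3`,
and applying Jensen's inequality to the probability measure `W(θ - t) dt / 3` gives
`|P(e θ)|^p ≤ 3^(p-1) ∫ |P(e t)|^p W(θ - t) dt`. Sampling at the nodes `θ = j/m` kills every
frequency of `K_M` not divisible by `m`, so `∑_j K_M(j/m - t) ≤ m (⌊M/m⌋ + 1)` and
`∑_j W(j/m - t) ≤ 8m`. Summing the pointwise bounds over the nodes bounds the average by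
`8 · 3^(p-1) ≤ 24^p` times `∫ |P(e t)|^p`.
-/

lemma Real.rpow_tangent_le {p a x : ℝ} (hp : 1 ≤ p) (ha : 0 < a) (hx : 0 ≤ x) :
    a ^ p + p * a ^ (p - 1) * (x - a) ≤ x ^ p := by
  have h := one_add_mul_self_le_rpow_one_add (s := x / a - 1)
    (by linarith [div_nonneg hx ha.le]) hp
  rw [add_sub_cancel, Real.div_rpow hx ha.le, le_div_iff₀ (Real.rpow_pos_of_pos ha p)] at h
  calc a ^ p + p * a ^ (p - 1) * (x - a) = (1 + p * (x / a - 1)) * a ^ p := by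
        rw [Real.rpow_sub_one ha.ne']; field_simp
    _ ≤ x ^ p := h

theorem MeasureTheory.rpow_integral_mul_le {α : Type*} [MeasurableSpace α] {μ : Measure α}
    {f w : α → ℝ} {p : ℝ} (hp : 1 ≤ p) (hf : 0 ≤ f) (hw : 0 ≤ w) (hw_int : Integrable w μ)
    (hfw : Integrable (fun x => f x * w x) μ) (hfpw : Integrable (fun x => f x ^ p * w x) μ) :
    (∫ x, f x * w x ∂μ) ^ p ≤ (∫ x, w x ∂μ) ^ (p - 1) * ∫ x, f x ^ p * w x ∂μ := by
  set A := ∫ x, f x * w x ∂μ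
  set c := ∫ x, w x ∂μ
  rcases (integral_nonneg fun x => mul_nonneg (hf x) (hw x) : 0 ≤ A).eq_or_lt with hA | hA
  · rw [show A = 0 from hA.symm, Real.zero_rpow (by linarith)]
    exact mul_nonneg (Real.rpow_nonneg (integral_nonneg hw) _)
      (integral_nonneg fun x => mul_nonneg (Real.rpow_nonneg (hf x) _) (hw x))
  have hc : 0 < c := by
    refine (integral_nonneg hw).lt_of_ne fun hc => hA.ne' ?_
    have hw0 : w =ᵐ[μ] 0 := (integral_eq_zero_iff_of_nonneg hw hw_int).1 hc.symm
    exact integral_eq_zero_of_ae (hw0.mono fun x hx => by simp [hx])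
  set a := A / c
  have ha : 0 < a := div_pos hA hc
  have hac : a * c = A := div_mul_cancel₀ A hc.ne'
  -- integrate the tangent line of `x ↦ x ^ p` at the weighted mean `a` of `f`
  have hconst : Integrable (fun x => a ^ p * w x) μ := hw_int.const_mul _
  have hlin : Integrable (fun x => p * a ^ (p - 1) * (f x * w x - a * w x)) μ :=
    (hfw.sub (hw_int.const_mul a)).const_mul _
  have htangent : a ^ p * c ≤ ∫ x, f x ^ p * w x ∂μ := by
    calc a ^ p * c
        = ∫ x, a ^ p * w x + p * a ^ (p - 1) * (f x * w x - a * w x) ∂μ := by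
          rw [integral_add hconst hlin,
            integral_const_mul, integral_const_mul, integral_sub hfw (hw_int.const_mul a),
            integral_const_mul, hac, sub_self, mul_zero, add_zero, mul_comm]
      _ ≤ ∫ x, f x ^ p * w x ∂μ := by
          refine integral_mono (hconst.add hlin) hfpw fun x => ?_
          have := mul_le_mul_of_nonneg_right (Real.rpow_tangent_le hp ha (hf x)) (hw x)
          linarith
  calc A ^ p = c ^ (p - 1) * (a ^ p * c) := by
        rw [← hac, Real.mul_rpow ha.le hc.le, Real.rpow_sub_one hc.ne']
        field_simp
    _ ≤ c ^ (p - 1) * ∫ x, f x ^ p * w x ∂μ :=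
        mul_le_mul_of_nonneg_left htangent (Real.rpow_nonneg hc.le _)

namespace MarcinkiewiczZygmund

noncomputable def e (t : ℝ) : ℂ := exp (2 * π * I * t)

lemma e_add (s t : ℝ) : e (s + t) = e s * e t := by
  simp only [e, ofReal_add, mul_add, exp_add]

lemma conj_e (t : ℝ) : (starRingEnd ℂ) (e t) = e (-t) := by
  rw [e, e, ← exp_conj]
  simp only [map_mul, conj_ofReal, conj_I, map_ofNat, ofReal_neg]
  ring_nf

lemma norm_e (t : ℝ) : ‖e t‖ = 1 := by
  simp [e, norm_exp]

lemma continuous_e : Continuous e := by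
  unfold e; fun_prop

lemma e_natCast_mul (k : ℕ) (t : ℝ) : e (k * t) = e t ^ k := by
  rw [e, e, ← exp_nat_mul]
  push_cast
  ring_nf

lemma e_eq_one_iff (x : ℝ) : e x = 1 ↔ ∃ k : ℤ, x = k := by
  have h2πI : 2 * π * I ≠ 0 := by simp [Real.pi_ne_zero, I_ne_zero]
  simp only [e, exp_eq_one_iff]
  refine exists_congr fun k => ⟨fun h => ?_, fun h => by rw [h]; push_cast; ring⟩
  exact_mod_cast mul_left_cancel₀ h2πI (h.trans (mul_comm _ _))

lemma e_intCast (k : ℤ) : e k = 1 :=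
  (e_eq_one_iff _).2 ⟨k, rfl⟩

lemma e_zero : e 0 = 1 := by
  simpa using e_intCast 0

lemma integral_e_intCast_mul (k : ℤ) :
    ∫ t in Set.Ioc (0 : ℝ) 1, e (k * t) = if k = 0 then 1 else 0 := by
  rw [← intervalIntegral.integral_of_le zero_le_one]
  split_ifs with hk
  · simp [hk, e]
  have hc : 2 * π * I * k ≠ 0 := by simp [Real.pi_ne_zero, I_ne_zero, hk]
  have he : ∀ t : ℝ, e (k * t) = exp (2 * π * I * k * t) := fun t => by
    rw [e]; push_cast; ring_nf
  simp only [he]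
  rw [integral_exp_mul_complex hc, ← he 1, ← he 0, mul_one, mul_zero, e_intCast,
    e_zero, sub_self, zero_div]

lemma sum_range_e_mul_div {m : ℕ} (hm : 0 < m) (k : ℤ) :
    ∑ j ∈ range m, e (k * (j / m)) = if (m : ℤ) ∣ k then (m : ℂ) else 0 := by
  have hpow : ∀ j : ℕ, e (k * (j / m)) = e (k / m) ^ j := fun j => by
    rw [← e_natCast_mul]; ring_nf
  simp only [hpow]
  split_ifs with hk
  · obtain ⟨c, rfl⟩ := hk
    have : e (((m * c : ℤ) : ℝ) / m) = 1 := by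
      rw [(e_eq_one_iff _).2 ⟨c, by push_cast; field_simp⟩]
    simp only [this, one_pow, sum_const, card_range, nsmul_eq_mul, mul_one]
  · have hne : e (k / m) ≠ 1 := by
      rintro h
      obtain ⟨c, hc⟩ := (e_eq_one_iff _).1 h
      refine hk ⟨c, ?_⟩
      field_simp at hc
      exact_mod_cast hc
    have hpow_m : e (k / m) ^ m = 1 := by
      rw [← e_natCast_mul, mul_div_cancel₀ _ (by positivity), e_intCast]
    rw [geom_sum_eq hne, hpow_m, sub_self, zero_div]

noncomputable def fejer (M : ℕ) (t : ℝ) : ℝ := normSq (∑ a ∈ range M, e (a * t)) / M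

lemma fejer_nonneg (M : ℕ) (t : ℝ) : 0 ≤ fejer M t :=
  div_nonneg (normSq_nonneg _) M.cast_nonneg

lemma continuous_fejer (M : ℕ) : Continuous (fejer M) := by
  unfold fejer
  have := continuous_e
  fun_prop

lemma ofReal_fejer (M : ℕ) (t : ℝ) :
    (fejer M t : ℂ) = (∑ a ∈ range M, ∑ b ∈ range M, e (((a - b : ℤ) : ℝ) * t)) / M := by
  rw [fejer, ofReal_div, ← mul_conj, map_sum, sum_mul_sum, ofReal_natCast]
  congr 1
  refine sum_congr rfl fun a _ => sum_congr rfl fun b _ => ?_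
  rw [conj_e, ← e_add]
  push_cast
  ring_nf

lemma integral_e_mul_fejer (M k : ℕ) (θ : ℝ) :
    ∫ t in Set.Ioc (0 : ℝ) 1, e (k * t) * fejer M (θ - t) = ((M - k : ℕ) / M : ℂ) * e (k * θ) := by
  have hexpand : ∀ t : ℝ, e (k * t) * fejer M (θ - t) = (∑ a ∈ range M, ∑ b ∈ range M,
      e (((a - b : ℤ) : ℝ) * θ) * e (((k - (a - b) : ℤ) : ℝ) * t)) / M := fun t => by
    rw [ofReal_fejer, mul_div_assoc', mul_sum]
    congr 1
    refine sum_congr rfl fun a _ => ?_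
    rw [mul_sum]
    refine sum_congr rfl fun b _ => ?_
    rw [← e_add, ← e_add]
    push_cast
    ring_nf
  have hint : ∀ a b : ℕ, Integrable (fun t => e (((a - b : ℤ) : ℝ) * θ) *
      e (((k - (a - b) : ℤ) : ℝ) * t)) (volume.restrict (Set.Ioc (0 : ℝ) 1)) := fun a b =>
    (continuous_const.mul (continuous_e.comp (continuous_const.mul continuous_id))).integrableOn_Ioc
  have hcoeff : ∀ a b : ℕ, ∫ t in Set.Ioc (0 : ℝ) 1, e (((a - b : ℤ) : ℝ) * θ) *
      e (((k - (a - b) : ℤ) : ℝ) * t) = if a = b + k then e (k * θ) else 0 := fun a b => by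
    rw [integral_const_mul, integral_e_intCast_mul]
    by_cases h : a = b + k
    · subst h; simp
    · simp [h, show (k : ℤ) - (a - b) ≠ 0 by omega]
  simp only [hexpand, integral_div, integral_finsetSum _ fun a _ =>
    integrable_finsetSum _ fun b _ => hint a b, integral_finsetSum _ fun b _ => hint _ b, hcoeff]
  rw [sum_comm]
  simp only [sum_ite_eq', mem_range, ← sum_filter, sum_const, nsmul_eq_mul]
  have : #{b ∈ range M | b + k < M} = M - k := by
    rw [show {b ∈ range M | b + k < M} = range (M - k) by ext; simp; omega, card_range]
  rw [this, mul_div_right_comm]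

lemma integral_fejer {M : ℕ} (hM : 0 < M) (θ : ℝ) :
    ∫ t in Set.Ioc (0 : ℝ) 1, fejer M (θ - t) = 1 := by
  have h := integral_e_mul_fejer M 0 θ
  simp only [CharP.cast_eq_zero, zero_mul, e_zero, one_mul,
    Nat.sub_zero, mul_one] at h
  rw [integral_complex_ofReal, div_self (Nat.cast_ne_zero.2 hM.ne')] at h
  exact_mod_cast h

lemma sum_fejer_sample_le {m : ℕ} (hm : 0 < m) (M : ℕ) (t : ℝ) :
    ∑ j ∈ range m, fejer M (j / m - t) ≤ m * (M / m + 1 : ℕ) := by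
  have hexpand : ((∑ j ∈ range m, fejer M (j / m - t) : ℝ) : ℂ) = (∑ a ∈ range M, ∑ b ∈ range M,
      (if (m : ℤ) ∣ (a - b : ℤ) then (m : ℂ) else 0) * e (-((a - b : ℤ) : ℝ) * t)) / M := by
    rw [ofReal_sum]
    simp only [ofReal_fejer]
    rw [← sum_div, sum_comm]
    congr 1
    refine sum_congr rfl fun a _ => ?_
    rw [sum_comm]
    refine sum_congr rfl fun b _ => ?_
    rw [← sum_range_e_mul_div hm, sum_mul]
    refine sum_congr rfl fun j _ => ?_
    rw [← e_add]
    ring_nf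
  have hcount : ∀ a : ℕ, #{b ∈ range M | (m : ℤ) ∣ (a : ℤ) - (b : ℕ)} ≤ M / m + 1 := fun a => by
    simp_rw [← Nat.modEq_iff_dvd]
    rw [← Nat.count_eq_card_filter_range, Nat.count_modEq_card _ hm]
    split_ifs <;> omega
  rw [← Complex.norm_of_nonneg (sum_nonneg fun j _ => fejer_nonneg M _), hexpand, norm_div,
    Complex.norm_natCast]
  refine div_le_of_le_mul₀ M.cast_nonneg (by positivity) ?_
  calc ‖∑ a ∈ range M, ∑ b ∈ range M,
        (if (m : ℤ) ∣ (a - b : ℤ) then (m : ℂ) else 0) * e (-((a - b : ℤ) : ℝ) * t)‖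
      ≤ ∑ a ∈ range M, ∑ b ∈ range M, if (m : ℤ) ∣ (a - b : ℤ) then (m : ℝ) else 0 := by
        refine (norm_sum_le _ _).trans (sum_le_sum fun a _ =>
          (norm_sum_le _ _).trans (sum_le_sum fun b _ => ?_))
        split_ifs <;> simp [norm_e]
    _ = ∑ a ∈ range M, (m : ℝ) * #{b ∈ range M | (m : ℤ) ∣ (a : ℤ) - (b : ℕ)} := by
        simp only [sum_ite, sum_const_zero, add_zero, sum_const, nsmul_eq_mul, mul_comm]
    _ ≤ ∑ a ∈ range M, (m : ℝ) * (M / m + 1 : ℕ) := by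
        gcongr with a
        exact_mod_cast hcount a
    _ = m * (M / m + 1 : ℕ) * M := by
        rw [sum_const, card_range, nsmul_eq_mul]
        ring

noncomputable def vallePoussin (m : ℕ) (t : ℝ) : ℝ := 2 * fejer (2 * m) t - fejer m t

lemma integral_e_mul_vallePoussin {m k : ℕ} (hk : k < m) (θ : ℝ) :
    ∫ t in Set.Ioc (0 : ℝ) 1, e (k * t) * vallePoussin m (θ - t) = e (k * θ) := by
  have hint : ∀ M, Integrable (fun t : ℝ => e (k * t) * fejer M (θ - t))
      (volume.restrict (Set.Ioc (0 : ℝ) 1)) := fun M =>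
    ((continuous_e.comp (continuous_const.mul continuous_id)).mul (continuous_ofReal.comp
      ((continuous_fejer M).comp (continuous_const.sub continuous_id)))).integrableOn_Ioc
  simp only [vallePoussin, ofReal_sub, ofReal_mul, ofReal_ofNat, mul_sub, mul_left_comm _ (2 : ℂ)]
  rw [integral_sub ((hint _).const_mul 2) (hint _), integral_const_mul, integral_e_mul_fejer,
    integral_e_mul_fejer, Nat.cast_sub (by omega), Nat.cast_sub hk.le]
  have hm : (m : ℂ) ≠ 0 := Nat.cast_ne_zero.2 (by omega)
  push_cast
  field_simp
  ring

lemma eval_e_eq_integral_mul_vallePoussin {m : ℕ} {P : Polynomial ℂ} (hP : P.natDegree < m)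
    (θ : ℝ) : P.eval (e θ) = ∫ t in Set.Ioc (0 : ℝ) 1, P.eval (e t) * vallePoussin m (θ - t) := by
  simp only [Polynomial.eval_eq_sum_range' hP, sum_mul, ← e_natCast_mul, mul_assoc]
  rw [integral_finsetSum _ fun k _ => ?_]
  · exact sum_congr rfl fun k hk => by
      rw [integral_const_mul, integral_e_mul_vallePoussin (mem_range.1 hk)]
  · refine Continuous.integrableOn_Ioc ?_
    have := continuous_e
    have := continuous_fejer
    unfold vallePoussin
    fun_prop

noncomputable def vallePoussinMajorant (m : ℕ) (t : ℝ) : ℝ := 2 * fejer (2 * m) t + fejer m t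

lemma abs_vallePoussin_le (m : ℕ) (t : ℝ) : |vallePoussin m t| ≤ vallePoussinMajorant m t := by
  have := fejer_nonneg (2 * m) t
  have := fejer_nonneg m t
  rw [vallePoussin, vallePoussinMajorant, abs_le]
  constructor <;> linarith

lemma vallePoussinMajorant_nonneg (m : ℕ) (t : ℝ) : 0 ≤ vallePoussinMajorant m t :=
  (abs_nonneg _).trans (abs_vallePoussin_le m t)

lemma continuous_vallePoussinMajorant (m : ℕ) : Continuous (vallePoussinMajorant m) := by
  have := continuous_fejer
  unfold vallePoussinMajorant
  fun_prop

lemma integral_vallePoussinMajorant {m : ℕ} (hm : 0 < m) (θ : ℝ) :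
    ∫ t in Set.Ioc (0 : ℝ) 1, vallePoussinMajorant m (θ - t) = 3 := by
  have hint : ∀ M, Integrable (fun t : ℝ => fejer M (θ - t))
      (volume.restrict (Set.Ioc (0 : ℝ) 1)) := fun M => ((continuous_fejer M).comp (continuous_const.sub continuous_id)).integrableOn_Ioc
  simp only [vallePoussinMajorant]
  rw [integral_add ((hint _).const_mul 2) (hint _), integral_const_mul, integral_fejer (by omega),
    integral_fejer hm]
  norm_num

lemma sum_vallePoussinMajorant_sample_le {m : ℕ} (hm : 0 < m) (t : ℝ) :
    ∑ j ∈ range m, vallePoussinMajorant m (j / m - t) ≤ 8 * m := by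
  have h2m := sum_fejer_sample_le hm (2 * m) t
  have hm' := sum_fejer_sample_le hm m t
  rw [Nat.mul_div_cancel _ hm, Nat.div_self hm] at *
  push_cast at h2m hm'
  simp only [vallePoussinMajorant, sum_add_distrib, ← mul_sum]
  linarith

lemma norm_eval_e_le_integral {m : ℕ} {P : Polynomial ℂ} (hP : P.natDegree < m) (θ : ℝ) :
    ‖P.eval (e θ)‖ ≤
      ∫ t in Set.Ioc (0 : ℝ) 1, ‖P.eval (e t)‖ * vallePoussinMajorant m (θ - t) := by
  rw [eval_e_eq_integral_mul_vallePoussin hP]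
  refine (norm_integral_le_integral_norm _).trans (integral_mono_of_nonneg
    (.of_forall fun t => norm_nonneg _) ?_ (.of_forall fun t => ?_))
  · have := continuous_e
    have := continuous_vallePoussinMajorant m
    exact (Continuous.integrableOn_Ioc (by fun_prop))
  · simp only [norm_mul, norm_real, Real.norm_eq_abs]
    exact mul_le_mul_of_nonneg_left (abs_vallePoussin_le m _) (norm_nonneg _)

lemma rpow_norm_eval_e_le {m : ℕ} {P : Polynomial ℂ} (hP : P.natDegree < m) {p : ℝ} (hp : 1 ≤ p)
    (θ : ℝ) : ‖P.eval (e θ)‖ ^ p ≤ 3 ^ (p - 1) *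
      ∫ t in Set.Ioc (0 : ℝ) 1, ‖P.eval (e t)‖ ^ p * vallePoussinMajorant m (θ - t) := by
  have := continuous_e
  have := continuous_vallePoussinMajorant m
  have hgp : Continuous fun t => ‖P.eval (e t)‖ ^ p :=
    Continuous.rpow_const (by fun_prop) fun _ => Or.inr (by linarith)
  rw [← integral_vallePoussinMajorant (by omega : 0 < m) θ]
  calc ‖P.eval (e θ)‖ ^ p
      ≤ (∫ t in Set.Ioc (0 : ℝ) 1, ‖P.eval (e t)‖ * vallePoussinMajorant m (θ - t)) ^ p :=
        Real.rpow_le_rpow (norm_nonneg _) (norm_eval_e_le_integral hP θ) (by linarith)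
    _ ≤ _ := rpow_integral_mul_le hp (fun t => norm_nonneg _)
        (fun t => vallePoussinMajorant_nonneg _ _) (Continuous.integrableOn_Ioc (by fun_prop))
        (Continuous.integrableOn_Ioc (by fun_prop)) (Continuous.integrableOn_Ioc (by fun_prop))

lemma sum_rpow_norm_eval_e_sample_le {m : ℕ} {P : Polynomial ℂ} (hP : P.natDegree < m) {p : ℝ}
    (hp : 1 ≤ p) : ∑ j ∈ range m, ‖P.eval (e (j / m))‖ ^ p ≤
      8 * 3 ^ (p - 1) * m * ∫ t in Set.Ioc (0 : ℝ) 1, ‖P.eval (e t)‖ ^ p := by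
  have := continuous_e
  have := continuous_vallePoussinMajorant m
  have hgp : Continuous fun t => ‖P.eval (e t)‖ ^ p :=
    Continuous.rpow_const (by fun_prop) fun _ => Or.inr (by linarith)
  have hgp_nonneg : ∀ t : ℝ, 0 ≤ ‖P.eval (e t)‖ ^ p := fun t => Real.rpow_nonneg (norm_nonneg _) p
  calc ∑ j ∈ range m, ‖P.eval (e (j / m))‖ ^ p
      ≤ ∑ j ∈ range m, 3 ^ (p - 1) * ∫ t in Set.Ioc (0 : ℝ) 1,
          ‖P.eval (e t)‖ ^ p * vallePoussinMajorant m (j / m - t) :=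
        sum_le_sum fun j _ => rpow_norm_eval_e_le hP hp _
    _ = 3 ^ (p - 1) * ∫ t in Set.Ioc (0 : ℝ) 1,
          ‖P.eval (e t)‖ ^ p * ∑ j ∈ range m, vallePoussinMajorant m (j / m - t) := by
        rw [← mul_sum, ← integral_finsetSum _ fun j _ => Continuous.integrableOn_Ioc (by fun_prop)]
        simp only [mul_sum]
    _ ≤ 3 ^ (p - 1) * ∫ t in Set.Ioc (0 : ℝ) 1, ‖P.eval (e t)‖ ^ p * (8 * m) := by
        refine mul_le_mul_of_nonneg_left (integral_mono (Continuous.integrableOn_Ioc (by fun_prop))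
          (Continuous.integrableOn_Ioc (by fun_prop)) fun t => ?_) (by positivity)
        exact mul_le_mul_of_nonneg_left (sum_vallePoussinMajorant_sample_le (by omega) t)
          (hgp_nonneg t)
    _ = 8 * 3 ^ (p - 1) * m * ∫ t in Set.Ioc (0 : ℝ) 1, ‖P.eval (e t)‖ ^ p := by
        rw [integral_mul_const]
        ring

lemma average_rpow_norm_eval_e_sample_le {m : ℕ} {P : Polynomial ℂ} (hP : P.natDegree < m)
    {p : ℝ} (hp : 1 ≤ p) : 1 / (m : ℝ) * ∑ j ∈ range m, ‖P.eval (e (j / m))‖ ^ p ≤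
      24 ^ p * ∫ t in Set.Ioc (0 : ℝ) 1, ‖P.eval (e t)‖ ^ p := by
  have hm : (0 : ℝ) < m := by exact_mod_cast (by omega : 0 < m)
  have h3 : (3 : ℝ) ^ (p - 1) ≤ 3 ^ p :=
    Real.rpow_le_rpow_of_exponent_le (by norm_num) (by linarith)
  have h8 : (8 : ℝ) ≤ 8 ^ p := by
    simpa using Real.rpow_le_rpow_of_exponent_le (by norm_num : (1 : ℝ) ≤ 8) hp
  calc 1 / (m : ℝ) * ∑ j ∈ range m, ‖P.eval (e (j / m))‖ ^ p
      ≤ 1 / m * (8 * 3 ^ (p - 1) * m * ∫ t in Set.Ioc (0 : ℝ) 1, ‖P.eval (e t)‖ ^ p) := by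
        gcongr
        exact sum_rpow_norm_eval_e_sample_le hP hp
    _ = 8 * 3 ^ (p - 1) * ∫ t in Set.Ioc (0 : ℝ) 1, ‖P.eval (e t)‖ ^ p := by
        field_simp
    _ ≤ 8 ^ p * 3 ^ p * ∫ t in Set.Ioc (0 : ℝ) 1, ‖P.eval (e t)‖ ^ p := by
        gcongr
    _ = 24 ^ p * ∫ t in Set.Ioc (0 : ℝ) 1, ‖P.eval (e t)‖ ^ p := by
        rw [← Real.mul_rpow (by norm_num) (by norm_num)]
        norm_num

end MarcinkiewiczZygmund

/-- **Marcinkiewicz–Zygmund inequality, forward direction.**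
There is a universal constant `N` such that for every `n ≥ 0`, every complex polynomial
`P` of degree at most `n`, and every `p ∈ [1,∞)`, the normalized `ℓ^p` average of `P` over the
`(n+1)`-st roots of unity is bounded by `N` times the `L^p` norm of `t ↦ P(e^{2πit})` on `[0,1]`. -/
theorem marcinkiewicz_zygmund_forward :
    ∃ N : ℝ, 0 < N ∧
      ∀ (n : ℕ) (P : Polynomial ℂ), P.natDegree ≤ n →
        ∀ p : ℝ, 1 ≤ p →
          ((1/((n:ℝ)+1)) * ∑ j ∈ Finset.range (n+1),
              ‖P.eval (Complex.exp (2 * Real.pi * Complex.I * (j:ℂ) / ((n:ℂ)+1)))‖ ^ p)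
            ^ (1/p)
          ≤ N * (∫ t in Set.Ioc (0:ℝ) 1,
              ‖P.eval (Complex.exp (2 * Real.pi * Complex.I * (t:ℂ)))‖ ^ p) ^ (1/p) := by
  refine ⟨24, by norm_num, fun n P hP p hp => ?_⟩
  have hnode : ∀ j : ℕ, exp (2 * π * I * j / ((n : ℂ) + 1)) =
      MarcinkiewiczZygmund.e (j / ((n : ℝ) + 1)) := fun j => by
    rw [MarcinkiewiczZygmund.e]
    push_cast
    ring_nf
  have havg := MarcinkiewiczZygmund.average_rpow_norm_eval_e_sample_le (m := n + 1) (P := P)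
    (by omega) hp
  push_cast at havg
  simp only [hnode]
  change _ ≤ 24 * (∫ t in Set.Ioc (0 : ℝ) 1, ‖P.eval (MarcinkiewiczZygmund.e t)‖ ^ p) ^ (1 / p)
  rw [← Real.rpow_rpow_inv (by norm_num : (0 : ℝ) ≤ 24) (by linarith : p ≠ 0), ← one_div,
    ← Real.mul_rpow (by positivity) (integral_nonneg fun t => by positivity)]
  exact Real.rpow_le_rpow (by positivity) havg (by positivity)
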